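/- arXiv:1504.04236 — 3 statements merged into one kernel-verified Lean document; each statement's English description precedes it below -/
import Mathlib

section
/- Let L be a split regular Hom-Leibniz algebra with maximal abelian subalgebra H and root spaces L_α. Then for any α, β ∈ Λ ∪ {0}, the product of root spaces satisfies [L_α, L_β] ⊆ L_{α∘φ⁻¹ + β∘φ⁻¹}. -/
open Submodule

/-- A split regular Hom-Leibniz algebra: a vector space `L` over `K` with a bilinear
product, an algebra automorphism `φ` satisfying the Hom-Leibniz identity, together with
a distinguished abelian subalgebra `H` (with `φ|_H` given as `φH`). -/
structure SplitRegularHomLeibniz (K L : Type*) [Field K] [AddCommGroup L] [Module K L] where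
  bracket : L →ₗ[K] L →ₗ[K] L
  φ : L ≃ₗ[K] L
  leibniz : ∀ x y z : L, bracket (bracket y z) (φ x)
      = bracket (bracket y x) (φ z) + bracket (φ y) (bracket z x)
  φ_bracket : ∀ x y : L, φ (bracket x y) = bracket (φ x) (φ y)
  H : Submodule K L
  H_abelian : ∀ x ∈ H, ∀ y ∈ H, bracket x y = 0
  φH : H ≃ₗ[K] H
  φH_spec : ∀ h : H, (φH h : L) = φ h

namespace SplitRegularHomLeibniz

variable {K L : Type*} [Field K] [AddCommGroup L] [Module K L]
variable (A : SplitRegularHomLeibniz K L)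

/-- The root space associated to a linear functional `α : H → K`. -/
def rootSpace (α : Module.Dual K A.H) : Submodule K L where
  carrier := {v | ∀ h : A.H, A.bracket v h = α h • A.φ v}
  add_mem' := by
    intro a b ha hb h
    simp [map_add, ha h, hb h, smul_add]
  zero_mem' := by intro h; simp
  smul_mem' := by
    intro c a ha h
    simp only [map_smul, LinearMap.smul_apply, ha h]
    rw [smul_comm]

/-- The set of nonzero roots. -/
def roots : Set (Module.Dual K A.H) := {α | α ≠ 0 ∧ A.rootSpace α ≠ ⊥}

/-- The splitting condition : `L = H ⊕ (⊕_{α ∈ Λ} L_α)`. -/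
def IsSplit : Prop :=
  (A.H ⊔ ⨆ α ∈ A.roots, A.rootSpace α) = ⊤ ∧
  iSupIndep
    (fun i : Option A.roots => Option.elim i A.H (fun α => A.rootSpace α.1))

/-- `H` is a maximal abelian subalgebra. -/
def MaximalAbelian : Prop := ∀ H' : Submodule K L,
  (∀ x ∈ H', ∀ y ∈ H', A.bracket x y = 0) → H'.map A.φ.toLinearMap = H' →
    A.H ≤ H' → H' = A.H

/-- The map `α ↦ α ∘ φ⁻¹` on linear functionals on `H`. -/
def twist (α : Module.Dual K A.H) : Module.Dual K A.H :=
  α.comp A.φH.symm.toLinearMap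

/-- The map `α ↦ α ∘ φ^{-z}` for `z : ℤ`. -/
def ztwist (z : ℤ) (α : Module.Dual K A.H) : Module.Dual K A.H :=
  α.comp ((A.φH ^ (-z)).toLinearMap)

/-- Twisted partial sums of a chain of roots:
`s 0 = f 0`, `s (i+1) = (s i)∘φ⁻¹ + (f (i+1))∘φ⁻¹`. -/
def chainSums (f : ℕ → Module.Dual K A.H) : ℕ → Module.Dual K A.H
  | 0 => f 0
  | i + 1 => A.twist (chainSums f i + f (i + 1))

/-- `α` is connected to `β`. -/
def Connected (α β : Module.Dual K A.H) : Prop :=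
  ∃ (k : ℕ) (f : ℕ → Module.Dual K A.H),
    (∀ i ≤ k, f i ∈ A.roots) ∧
    (∃ n : ℕ, f 0 = A.twist^[n] α) ∧
    (∀ i < k, A.chainSums f i ∈ A.roots) ∧
    (∃ m : ℕ, A.chainSums f k = A.twist^[m] β ∨ A.chainSums f k = -(A.twist^[m] β))

/-- Symmetric root system. -/
def SymmetricRoots : Prop := ∀ α ∈ A.roots, -α ∈ A.roots

/-- `[L_α, L_{-α}]` as a submodule (its span). -/
def bracketSpan (α : Module.Dual K A.H) : Submodule K L :=
  Submodule.span K
    (Set.image2 (fun x y => A.bracket x y) (A.rootSpace α : Set L) (A.rootSpace (-α) : Set L))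

/-- The connection class of `α`. -/
def cls (α : Module.Dual K A.H) : Set (Module.Dual K A.H) :=
  {β | β ∈ A.roots ∧ A.Connected α β}

def I0 (α : Module.Dual K A.H) : Submodule K L := ⨆ β ∈ A.cls α, A.bracketSpan β

def Vcls (α : Module.Dual K A.H) : Submodule K L := ⨆ β ∈ A.cls α, A.rootSpace β

/-- The ideal associated to the connection class of `α`. -/
def Icls (α : Module.Dual K A.H) : Submodule K L := A.I0 α ⊔ A.Vcls α

/-- Ideals of a Hom-Leibniz algebra. -/
def IsIdeal (I : Submodule K L) : Prop :=
  (∀ x ∈ I, ∀ y : L, A.bracket x y ∈ I ∧ A.bracket y x ∈ I) ∧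
    I.map A.φ.toLinearMap = I

/-- The ideal `J` generated by the squares `[x,x]`. -/
def J : Submodule K L :=
  sInf {I : Submodule K L | A.IsIdeal I ∧ ∀ x : L, A.bracket x x ∈ I}

/-- The annihilator `Z(L)`. -/
def annihilator : Set L :=
  {x | ∀ y : L, A.bracket x y = 0 ∧ A.bracket y x = 0}


/-- The candidate ideal attached to a set of roots. -/
def IOfClass (S : Set (Module.Dual K A.H)) : Submodule K L :=
  (⨆ β ∈ S, A.bracketSpan β) ⊔ (⨆ β ∈ S, A.rootSpace β)

/-- Maximal length: every root space is one-dimensional. -/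
def MaximalLength : Prop := ∀ α ∈ A.roots, Module.finrank K (A.rootSpace α) = 1

/-- `L = [L,L]`. -/
def BracketGenerates : Prop :=
  Submodule.span K {z : L | ∃ x y : L, z = A.bracket x y} = ⊤

/-- The roots `α` with `L_α ⊆ J`. -/
def rootsJ : Set (Module.Dual K A.H) := {α ∈ A.roots | A.rootSpace α ≤ A.J}

/-- The roots `α` with `L_α ∩ J = 0`. -/
def rootsNotJ : Set (Module.Dual K A.H) := {α ∈ A.roots | A.rootSpace α ⊓ A.J = ⊥}

/-- Root-multiplicativity for split regular Hom-Leibniz algebras of maximal length. -/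
def RootMultiplicative : Prop :=
  (∀ α ∈ A.rootsNotJ, ∀ β ∈ A.rootsNotJ, A.twist α + A.twist β ∈ A.roots →
    ∃ x ∈ A.rootSpace α, ∃ y ∈ A.rootSpace β, A.bracket x y ≠ 0) ∧
  (∀ α ∈ A.rootsNotJ, ∀ γ ∈ A.rootsJ, A.twist α + A.twist γ ∈ A.rootsJ →
    ∃ x ∈ A.rootSpace α, ∃ y ∈ A.rootSpace γ, A.bracket x y ≠ 0)

/-- `α` is `¬J`-connected to `β` (both in `Λ^γ`, given by the set `S`):
there is a chain whose elements beyond the first lie in `Λ^{¬J}` and whose twisted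
partial sums lie in `Λ^γ`. -/
def NotJConnected (S : Set (Module.Dual K A.H)) (α β : Module.Dual K A.H) : Prop :=
  ∃ (k : ℕ) (f : ℕ → Module.Dual K A.H),
    (∀ i, 1 ≤ i → i ≤ k → f i ∈ A.rootsNotJ) ∧
    (∃ n : ℕ, f 0 = A.twist^[n] α) ∧
    (∀ i ≤ k, A.chainSums f i ∈ S) ∧
    (∃ m : ℕ, A.chainSums f k = A.twist^[m] β ∨ A.chainSums f k = -(A.twist^[m] β))

/-- Triviality of the Lie-annihilator `Z_Lie(L)`. -/
def LieAnnZero : Prop := ∀ x : L,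
  (∀ y ∈ A.H ⊔ ⨆ α ∈ A.rootsNotJ, A.rootSpace α,
    A.bracket x y = 0 ∧ A.bracket y x = 0) → x = 0

end SplitRegularHomLeibniz


open SplitRegularHomLeibniz in
theorem bracket_rootSpaces {K L : Type*} [Field K] [AddCommGroup L] [Module K L]
    (A : SplitRegularHomLeibniz K L)
    (hsplit : A.IsSplit) (hmax : A.MaximalAbelian)
    (α β : Module.Dual K A.H) (hα : α ∈ A.roots ∨ α = 0) (hβ : β ∈ A.roots ∨ β = 0) :
    ∀ x ∈ A.rootSpace α, ∀ y ∈ A.rootSpace β,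
      A.bracket x y ∈ A.rootSpace (A.twist α + A.twist β) := by
  intro x hx y hy
  intro h
  set h' : A.H := A.φH.symm h with hh'
  have hφh' : A.φ (h' : L) = (h : L) := by
    rw [← A.φH_spec h', hh', A.φH.apply_symm_apply]
  have hxh := hx h'
  have hyh := hy h'
  calc A.bracket (A.bracket x y) (h : L)
      = A.bracket (A.bracket x y) (A.φ (h' : L)) := by rw [hφh']
    _ = A.bracket (A.bracket x (h' : L)) (A.φ y) + A.bracket (A.φ x) (A.bracket y (h' : L)) :=
        A.leibniz (h' : L) x y
    _ = (α h' + β h') • A.φ (A.bracket x y) := by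
        rw [hxh, hyh, A.φ_bracket, map_smul, LinearMap.smul_apply, map_smul, add_smul]
    _ = (A.twist α + A.twist β) h • A.φ (A.bracket x y) := by
        simp [twist, hh']
end

section
/- Let L be a split regular Hom-Leibniz algebra with root system Λ. If α ∈ Λ then α∘φ^{-z} ∈ Λ for every integer z. -/
open Submodule

/-! `φ ^ z` preserves the bracket, restricts to `φH ^ z` on `H` and commutes with `φ`, so it
maps `L_α` injectively into `L_{α ∘ φ^{-z}}`; and `α ∘ φ^{-z} ≠ 0` since `φ^{-z}` is bijective
on `H`. -/

namespace SplitRegularHomLeibniz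

variable {K L : Type*} [Field K] [AddCommGroup L] [Module K L] (A : SplitRegularHomLeibniz K L)

lemma φ_symm_bracket (x y : L) :
    A.φ.symm (A.bracket x y) = A.bracket (A.φ.symm x) (A.φ.symm y) :=
  A.φ.injective <| by simp only [A.φ_bracket, LinearEquiv.apply_symm_apply]

lemma φ_zpow_bracket (z : ℤ) (x y : L) :
    (A.φ ^ z) (A.bracket x y) = A.bracket ((A.φ ^ z) x) ((A.φ ^ z) y) := by
  induction z using Int.induction_on generalizing x y with
  | zero => rfl
  | succ n ih => simp only [zpow_add_one, LinearEquiv.mul_apply, A.φ_bracket, ih]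
  | pred n ih =>
    simp only [zpow_sub_one, LinearEquiv.mul_apply, LinearEquiv.coe_inv, φ_symm_bracket, ih]

lemma coe_φH_symm_apply (h : A.H) : (A.φH.symm h : L) = A.φ.symm h :=
  A.φ.injective <| by
    rw [← A.φH_spec, LinearEquiv.apply_symm_apply, LinearEquiv.apply_symm_apply]

lemma coe_φH_zpow_apply (z : ℤ) (h : A.H) : ((A.φH ^ z) h : L) = (A.φ ^ z) h := by
  induction z using Int.induction_on generalizing h with
  | zero => rfl
  | succ n ih => simp only [zpow_add_one, LinearEquiv.mul_apply, ih, A.φH_spec]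
  | pred n ih =>
    simp only [zpow_sub_one, LinearEquiv.mul_apply, LinearEquiv.coe_inv, ih, coe_φH_symm_apply]

lemma ztwist_eq_zero_iff (z : ℤ) (α : Module.Dual K A.H) : A.ztwist z α = 0 ↔ α = 0 := by
  refine ⟨fun h => LinearMap.ext fun x => ?_, fun h => by subst h; rfl⟩
  simpa only [ztwist, LinearMap.comp_apply, LinearEquiv.coe_coe, LinearEquiv.apply_symm_apply,
    LinearMap.zero_apply] using LinearMap.congr_fun h ((A.φH ^ (-z)).symm x)

lemma map_rootSpace_le (z : ℤ) (α : Module.Dual K A.H) :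
    (A.rootSpace α).map (A.φ ^ z).toLinearMap ≤ A.rootSpace (A.ztwist z α) := by
  rintro _ ⟨v, hv, rfl⟩ h
  have hh : (h : L) = (A.φ ^ z) ((A.φH ^ (-z)) h) := by
    rw [coe_φH_zpow_apply, ← LinearEquiv.mul_apply, ← zpow_add, add_neg_cancel, zpow_zero]
    rfl
  calc A.bracket ((A.φ ^ z) v) h = (A.φ ^ z) (A.bracket v ((A.φH ^ (-z)) h)) := by
        rw [φ_zpow_bracket, ← hh]
    _ = (A.φ ^ z) (α ((A.φH ^ (-z)) h) • A.φ v) := by rw [hv]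
    _ = A.ztwist z α h • A.φ ((A.φ ^ z) v) := by
        rw [map_smul, ← LinearEquiv.mul_apply, ← LinearEquiv.mul_apply,
          (Commute.self_zpow A.φ z).eq]
        rfl

end SplitRegularHomLeibniz

open SplitRegularHomLeibniz in
theorem root_ztwist_mem_general {K L : Type*} [Field K] [AddCommGroup L] [Module K L]
    (A : SplitRegularHomLeibniz K L)
    (α : Module.Dual K A.H) (hα : α ∈ A.roots) :
    ∀ z : ℤ, A.ztwist z α ∈ A.roots := by
  intro z
  obtain ⟨hα0, hαs⟩ := hα
  refine ⟨(A.ztwist_eq_zero_iff z α).not.mpr hα0, fun hbot => hαs ?_⟩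
  rw [← Submodule.map_eq_bot_iff (e := A.φ ^ z), eq_bot_iff, ← hbot]
  exact A.map_rootSpace_le z α

open SplitRegularHomLeibniz in
theorem root_ztwist_mem {K L : Type*} [Field K] [AddCommGroup L] [Module K L]
    (A : SplitRegularHomLeibniz K L)
    (hsplit : A.IsSplit) (hmax : A.MaximalAbelian)
    (α : Module.Dual K A.H) (hα : α ∈ A.roots) :
    ∀ z : ℤ, A.ztwist z α ∈ A.roots :=
  root_ztwist_mem_general A α hα
end

section
/- Let L be a split regular Hom-Leibniz algebra with symmetric root system Λ. The relation ~ on Λ defined by α ~ β if and only if α is connected to β (via a chain of roots as in the definition of connection) is an equivalence relation. -/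
open Submodule

namespace SplitRegularHomLeibniz

variable {K L : Type*} [Field K] [AddCommGroup L] [Module K L] (A : SplitRegularHomLeibniz K L)

lemma twist_add' (a b : Module.Dual K A.H) : A.twist (a + b) = A.twist a + A.twist b := by
  ext h; simp [twist]

lemma twist_smul' (c : K) (a : Module.Dual K A.H) : A.twist (c • a) = c • A.twist a := by
  ext h; simp [twist]

lemma twist_neg' (a : Module.Dual K A.H) : A.twist (-a) = -(A.twist a) := by
  ext h; simp [twist]

lemma twist_iter_add (n : ℕ) (a b : Module.Dual K A.H) :
    A.twist^[n] (a + b) = A.twist^[n] a + A.twist^[n] b := by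
  induction n with
  | zero => rfl
  | succ n ih => simp [Function.iterate_succ_apply', ih, twist_add']

lemma twist_iter_smul (n : ℕ) (c : K) (a : Module.Dual K A.H) :
    A.twist^[n] (c • a) = c • A.twist^[n] a := by
  induction n with
  | zero => rfl
  | succ n ih => simp [Function.iterate_succ_apply', ih, twist_smul']

lemma twist_iter_neg (n : ℕ) (a : Module.Dual K A.H) :
    A.twist^[n] (-a) = -(A.twist^[n] a) := by
  induction n with
  | zero => rfl
  | succ n ih => simp [Function.iterate_succ_apply', ih, twist_neg']

lemma twist_iter_comm (n : ℕ) (a : Module.Dual K A.H) :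
    A.twist (A.twist^[n] a) = A.twist^[n] (A.twist a) := by
  rw [← Function.iterate_succ_apply' A.twist, Function.iterate_succ_apply]

lemma twist_mem_roots {α : Module.Dual K A.H} (hα : α ∈ A.roots) : A.twist α ∈ A.roots := by
  obtain ⟨hne, hsp⟩ := hα
  constructor
  · intro h0
    apply hne
    ext x
    have := LinearMap.congr_fun h0 (A.φH x)
    simpa [twist] using this
  · rw [Submodule.ne_bot_iff] at hsp ⊢
    obtain ⟨v, hv, hv0⟩ := hsp
    have hv' : ∀ h : A.H, A.bracket v h = α h • A.φ v := hv
    refine ⟨A.φ v, fun h => ?_, by simp [hv0]⟩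
    have hrep : A.φ ((A.φH.symm h : A.H) : L) = (h : L) := by
      have := A.φH_spec (A.φH.symm h)
      simpa using this.symm
    calc A.bracket (A.φ v) (h : L) = A.bracket (A.φ v) (A.φ ((A.φH.symm h : A.H) : L)) := by
          rw [hrep]
      _ = A.φ (A.bracket v ((A.φH.symm h : A.H) : L)) := (A.φ_bracket _ _).symm
      _ = A.φ (α (A.φH.symm h) • A.φ v) := by rw [hv' (A.φH.symm h)]
      _ = (A.twist α) h • A.φ (A.φ v) := by rw [map_smul]; rfl

lemma twist_iter_mem_roots {α : Module.Dual K A.H} (hα : α ∈ A.roots) (n : ℕ) :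
    A.twist^[n] α ∈ A.roots := by
  induction n with
  | zero => exact hα
  | succ n ih => rw [Function.iterate_succ_apply']; exact A.twist_mem_roots ih

lemma smul_mem_roots (hsym : A.SymmetricRoots) {c : K} (hc : c = 1 ∨ c = -1)
    {α : Module.Dual K A.H} (hα : α ∈ A.roots) : c • α ∈ A.roots := by
  rcases hc with rfl | rfl
  · simpa using hα
  · have e : (-1 : K) • α = -α := by module
    rw [e]; exact hsym α hα

lemma chainSums_congr {f g : ℕ → Module.Dual K A.H} {i : ℕ}
    (h : ∀ j ≤ i, f j = g j) : A.chainSums f i = A.chainSums g i := by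
  induction i with
  | zero => exact h 0 le_rfl
  | succ i ih =>
    simp only [chainSums]
    rw [ih (fun j hj => h j (hj.trans (Nat.le_succ i))), h (i + 1) le_rfl]

lemma chainSums_twist_iter (d : ℕ) (f : ℕ → Module.Dual K A.H) (i : ℕ) :
    A.chainSums (fun j => A.twist^[d] (f j)) i = A.twist^[d] (A.chainSums f i) := by
  induction i with
  | zero => rfl
  | succ i ih =>
    simp only [chainSums, ih, ← twist_iter_add]
    rw [← Function.iterate_succ_apply' A.twist d, Function.iterate_succ_apply]

lemma end_sign {s β : Module.Dual K A.H} {m : ℕ}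
    (h : s = A.twist^[m] β ∨ s = -(A.twist^[m] β)) :
    ∃ c : K, (c = 1 ∨ c = -1) ∧ s = c • A.twist^[m] β := by
  rcases h with h | h
  · exact ⟨1, Or.inl rfl, by rw [h]; module⟩
  · exact ⟨-1, Or.inr rfl, by rw [h]; module⟩

lemma connected_refl {α : Module.Dual K A.H} (hα : α ∈ A.roots) : A.Connected α α := by
  refine ⟨0, fun _ => α, fun i _ => hα, ⟨0, rfl⟩, fun i hi => absurd hi (Nat.not_lt_zero i),
    0, Or.inl rfl⟩

lemma connected_symm' (hsym : A.SymmetricRoots) {α β : Module.Dual K A.H}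
    (hβ : β ∈ A.roots) (h : A.Connected α β) : A.Connected β α := by
  obtain ⟨k, f, hf, ⟨n, hn⟩, hmid, m, hend0⟩ := h
  obtain ⟨c, hc, hend⟩ := A.end_sign hend0
  have hcc : ∀ x : Module.Dual K A.H, c • c • x = x := by
    rcases hc with rfl | rfl <;> intro x <;> module
  set g : ℕ → Module.Dual K A.H := fun i =>
    Nat.casesOn i (c • A.chainSums f k) (fun j => -(c • A.twist^[2*j+1] (f (k - j)))) with hg
  have hg0 : g 0 = A.twist^[m] β := by
    simp only [hg, hend]
    exact hcc _
  have key : ∀ j, j ≤ k → A.chainSums g j = c • A.twist^[2*j] (A.chainSums f (k - j)) := by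
    intro j
    induction j with
    | zero => intro _; simp [chainSums, hg]
    | succ j ih =>
      intro hj
      have hjk : j ≤ k := (Nat.le_succ j).trans hj
      have hstep : A.chainSums f (k - j)
          = A.twist (A.chainSums f (k - (j+1)) + f (k - j)) := by
        rw [show k - j = (k - (j + 1)) + 1 from by omega]; rfl
      have hgj1 : g (j + 1) = -(c • A.twist^[2*j+1] (f (k - j))) := rfl
      rw [show A.chainSums g (j+1) = A.twist (A.chainSums g j + g (j+1)) from rfl,
        ih hjk, hgj1, hstep]
      rw [show 2*(j+1) = 2*j+1+1 from by ring]
      rw [← Function.iterate_succ_apply A.twist (2*j) (A.chainSums f (k - (j+1)) + f (k - j)),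
        twist_iter_add, smul_add, add_neg_cancel_right, twist_smul']
      exact congrArg (c • ·)
        (Function.iterate_succ_apply' A.twist (2*j+1) (A.chainSums f (k - (j+1)))).symm
  refine ⟨k, g, ?_, ⟨m, hg0⟩, ?_, 2*k + n, ?_⟩
  · intro i hi
    match i with
    | 0 => rw [hg0]; exact A.twist_iter_mem_roots hβ m
    | (j+1) =>
      have : f (k - j) ∈ A.roots := hf (k - j) (Nat.sub_le k j)
      have : c • A.twist^[2*j+1] (f (k - j)) ∈ A.roots :=
        A.smul_mem_roots hsym hc (A.twist_iter_mem_roots this _)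
      exact hsym _ this
  · intro i hi
    rcases Nat.eq_zero_or_pos i with rfl | hipos
    · rw [show A.chainSums g 0 = g 0 from rfl, hg0]
      exact A.twist_iter_mem_roots hβ m
    · rw [key i (le_of_lt hi)]
      have : A.chainSums f (k - i) ∈ A.roots := hmid (k - i) (by omega)
      exact A.smul_mem_roots hsym hc (A.twist_iter_mem_roots this _)
  · rw [key k le_rfl]
    simp only [Nat.sub_self]
    rw [show A.chainSums f 0 = f 0 from rfl, hn, ← Function.iterate_add_apply]
    rcases hc with rfl | rfl
    · exact Or.inl (by module)
    · exact Or.inr (by module)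

lemma connected_trans' (hsym : A.SymmetricRoots) {α β γ : Module.Dual K A.H}
    (hβ : β ∈ A.roots) (h1 : A.Connected α β) (h2 : A.Connected β γ) : A.Connected α γ := by
  obtain ⟨k, f, hf, ⟨n, hn⟩, hmid, m, hend0⟩ := h1
  obtain ⟨c, hc, hend⟩ := A.end_sign hend0
  obtain ⟨k', f', hf', ⟨n', hn'⟩, hmid', m', hend0'⟩ := h2
  obtain ⟨c', hc', hend'⟩ := A.end_sign hend0'
  set h : ℕ → Module.Dual K A.H := fun i =>
    if i ≤ k then A.twist^[n'] (f i) else c • A.twist^[m] (f' (i - k)) with hh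
  have claimA : ∀ i ≤ k, A.chainSums h i = A.twist^[n'] (A.chainSums f i) := by
    intro i hi
    rw [← A.chainSums_twist_iter n' f i]
    exact A.chainSums_congr (fun j hj => by simp [hh, if_pos (hj.trans hi)])
  have claimB : ∀ j, j ≤ k' → A.chainSums h (k + j) = c • A.twist^[m] (A.chainSums f' j) := by
    intro j
    induction j with
    | zero =>
      intro _
      rw [Nat.add_zero, claimA k le_rfl, hend, twist_iter_smul,
        show A.chainSums f' 0 = f' 0 from rfl, hn',
        ← Function.iterate_add_apply, ← Function.iterate_add_apply, Nat.add_comm n' m]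
    | succ j ih =>
      intro hj
      have hjk : j ≤ k' := (Nat.le_succ j).trans hj
      have hne : ¬ (k + j + 1 ≤ k) := by omega
      have hstep : h (k + j + 1) = c • A.twist^[m] (f' (j + 1)) := by
        have hid : k + j + 1 - k = j + 1 := by omega
        simp only [hh, if_neg hne, hid]
      rw [show A.chainSums h (k + (j+1)) = A.twist (A.chainSums h (k + j) + h (k + j + 1))
          from rfl, ih hjk, hstep, ← smul_add, ← twist_iter_add, twist_smul',
        twist_iter_comm]
      rfl
  refine ⟨k + k', h, ?_, ⟨n' + n, ?_⟩, ?_, m + m', ?_⟩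
  · intro i hi
    by_cases hik : i ≤ k
    · simp only [hh, if_pos hik]
      exact A.twist_iter_mem_roots (hf i hik) n'
    · simp only [hh, if_neg hik]
      exact A.smul_mem_roots hsym hc
        (A.twist_iter_mem_roots (hf' (i - k) (by omega)) m)
  · simp only [hh, if_pos (Nat.zero_le k), hn, ← Function.iterate_add_apply]
  · intro i hi
    by_cases hik : i ≤ k
    · rw [claimA i hik]
      rcases lt_or_eq_of_le hik with hik' | rfl
      · exact A.twist_iter_mem_roots (hmid i hik') n'
      · rw [hend, twist_iter_smul]
        exact A.smul_mem_roots hsym hc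
          (A.twist_iter_mem_roots (A.twist_iter_mem_roots hβ m) n')
    · have : i = k + (i - k) := by omega
      rw [this, claimB (i - k) (by omega)]
      exact A.smul_mem_roots hsym hc
        (A.twist_iter_mem_roots (hmid' (i - k) (by omega)) m)
  · rw [claimB k' le_rfl, hend', twist_iter_smul, ← Function.iterate_add_apply]
    rcases hc with rfl | rfl <;> rcases hc' with rfl | rfl
    · exact Or.inl (by module)
    · exact Or.inr (by module)
    · exact Or.inr (by module)
    · exact Or.inl (by module)

end SplitRegularHomLeibniz


open SplitRegularHomLeibniz in
theorem connected_equivalence {K L : Type*} [Field K] [AddCommGroup L] [Module K L]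
    (A : SplitRegularHomLeibniz K L)
    (hsplit : A.IsSplit) (hmax : A.MaximalAbelian)
    (hsym : A.SymmetricRoots) :
    Equivalence (fun α β : A.roots => A.Connected α.1 β.1) := by
  constructor
  · intro α
    exact A.connected_refl α.2
  · intro α β hab
    exact A.connected_symm' hsym β.2 hab
  · intro α β γ hab hbc
    exact A.connected_trans' hsym β.2 hab hbc
end
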